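/- arXiv:math/0702568 — 2 statements merged into one kernel-verified Lean document; each statement's English description precedes it below -/
import Mathlib

section
/- Let x, y be vertices of the tree T and for a, b ∈ X write c_{ab}(z) = ⟨c_z(x,y)δ_b, δ_a⟩. Then for every b ∈ X and every natural number k, the set of vertices a ∈ X such that c_{ab}(z) = ± z^k w^ℓ for some ℓ and all z ∈ 𝔻 has at most 2 elements; and for every a ∈ X and every natural number k, the set of vertices b ∈ X such that c_{ab}(z) = ± z^k w^ℓ for some ℓ and all z ∈ 𝔻 has at most 2 elements. Equivalently, for each b and each k there are at most 2 vertices a with d(a,b) = k and c_{ab} not identically zero on 𝔻, and symmetrically in a and b. -/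
noncomputable section

open scoped ComplexConjugate

/-- `ℓ²(X)`: the Hilbert space of square-summable complex functions on `X`. -/
abbrev ell2 (X : Type) : Type := lp (fun _ : X => ℂ) 2

/-- The Dirac function `δ_v` at a vertex `v`. -/
noncomputable def delta {X : Type} [DecidableEq X] (v : X) : ell2 X :=
  lp.single 2 v (1 : ℂ)

/-- `w = √(1 − z²)`, using the principal branch of the square root, which is
holomorphic off the negative real axis and positive on the positive reals. -/
noncomputable def W (z : ℂ) : ℂ := (1 - z ^ 2) ^ ((1 : ℂ) / 2)

/-- The defining property of the edge operator `c_z(x,y)` for adjacent vertices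
`x, y`: it sends `δ_x ↦ wδ_x − zδ_y`, `δ_y ↦ wδ_y + zδ_x`, and fixes `δ_v` for
every other vertex `v`. -/
def IsEdgeOp {X : Type} [DecidableEq X] (z : ℂ) (x y : X)
    (A : ell2 X →L[ℂ] ell2 X) : Prop :=
  A (delta x) = W z • delta x - z • delta y ∧
  A (delta y) = W z • delta y + z • delta x ∧
  ∀ v : X, v ≠ x → v ≠ y → A (delta v) = delta v

/-- The product `f(v₀,v₁) * f(v₁,v₂) * ⋯ * f(v_{n−1},v_n)` along a walk
`v₀, v₁, …, v_n`. -/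
def walkProd {X : Type} {T : SimpleGraph X} {E : Type} [Monoid E]
    (f : X → X → E) : {a b : X} → T.Walk a b → E
  | _, _, SimpleGraph.Walk.nil => 1
  | _, _, SimpleGraph.Walk.cons (u := u) (v := v) _ p => f u v * walkProd f p

/-!
Let `x = v₀, v₁, …, vₙ = y` be a geodesic, so that `c_z(x,y) = c_z(v₀,v₁) ⋯ c_z(vₙ₋₁,vₙ)`.
Each factor only mixes the two coordinates of its edge, so `c_z(x,y)` fixes `δ_b` for `b` off
the geodesic and maps `δ_b` into the span of the geodesic for `b` on it. Peeling off the first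
factor, the new coefficient at `v₀` is `z` times the old one at `v₁` (the old one at `v₀`
vanishes, since `v₀` does not lie on the rest of the geodesic); by induction every matrix
coefficient `c_{ab}` is either identically `0` or `± z^{d(a,b)} w^ℓ`. The exponent of `z` in
`± z^k w^ℓ` is determined by the order of vanishing at `z = 0`, so `c_{ab} = ± z^k w^ℓ` forces
`k = d(a,b)`. Finally, subwalks of a geodesic are geodesics, so a vertex on the geodesic has at
most two vertices of the geodesic at any given distance `k`: `k` steps forward and `k` back.
-/

open scoped Topology

section Coefficients

variable {X : Type} [DecidableEq X]

lemma delta_apply (a v : X) : delta a v = if v = a then 1 else 0 := by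
  simp [delta, lp.single_apply, Pi.single_apply]

lemma inner_delta (a : X) (f : ell2 X) : inner ℂ (delta a) f = f a := by
  simp [delta, lp.inner_single_left]

lemma ContinuousLinearMap.apply_eq_self_of_fixes_delta_off (A : ell2 X →L[ℂ] ell2 X)
    (s : Set X) (hA : ∀ i ∉ s, A (delta i) = delta i) (f : ell2 X) (hf : ∀ i ∈ s, f i = 0) :
    A f = f := by
  have hsum : HasSum (fun i => f i • delta i) f := by
    simpa [delta, ← lp.single_smul] using lp.hasSum_single ENNReal.ofNat_ne_top f
  refine (A.hasSum hsum).unique ?_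
  convert hsum using 2 with i
  by_cases hi : i ∈ s
  · simp [hf i hi]
  · rw [map_smul, hA i hi]

variable {z : ℂ} {u v : X} {A : ell2 X →L[ℂ] ell2 X}

lemma IsEdgeOp.apply_eq (hA : IsEdgeOp z u v A) (huv : u ≠ v) (f : ell2 X) :
    A f = f + f u • ((W z - 1) • delta u - z • delta v)
      + f v • ((W z - 1) • delta v + z • delta u) := by
  set g := f - f u • delta u - f v • delta v
  have hg (i : X) : g i = f i - f u * delta u i - f v * delta v i := rfl
  have hAg : A g = g := by
    refine A.apply_eq_self_of_fixes_delta_off {u, v} ?_ g ?_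
    · intro i hi
      simp only [Set.mem_insert_iff, Set.mem_singleton_iff, not_or] at hi
      exact hA.2.2 i hi.1 hi.2
    · rintro i (rfl | rfl) <;> simp [hg, delta_apply, huv, huv.symm]
  have hf : f = g + f u • delta u + f v • delta v := by simp only [g]; abel
  calc A f = A g + f u • A (delta u) + f v • A (delta v) := by
        conv_lhs => rw [hf]
        simp only [map_add, map_smul]
    _ = _ := by
        rw [hAg, hA.1, hA.2.1]
        simp only [g]
        module

lemma IsEdgeOp.apply_apply (hA : IsEdgeOp z u v A) (huv : u ≠ v) (f : ell2 X) (a : X) :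
    A f a = f a + f u * ((W z - 1) * delta u a - z * delta v a)
      + f v * ((W z - 1) * delta v a + z * delta u a) := by
  rw [hA.apply_eq huv]
  rfl

lemma IsEdgeOp.apply_apply_of_ne (hA : IsEdgeOp z u v A) (huv : u ≠ v) (f : ell2 X)
    {a : X} (hau : a ≠ u) (hav : a ≠ v) : A f a = f a := by
  simp [hA.apply_apply huv, delta_apply, hau, hav]

lemma IsEdgeOp.apply_apply_left (hA : IsEdgeOp z u v A) (huv : u ≠ v) (f : ell2 X) :
    A f u = W z * f u + z * f v := by
  simp [hA.apply_apply huv, delta_apply, huv]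
  ring

lemma IsEdgeOp.apply_apply_right (hA : IsEdgeOp z u v A) (huv : u ≠ v) (f : ell2 X) :
    A f v = W z * f v - z * f u := by
  simp [hA.apply_apply huv, delta_apply, huv.symm]
  ring

end Coefficients

namespace SimpleGraph.Walk

variable {V : Type} [DecidableEq V] {G : SimpleGraph V}

lemma eq_getVert_dist_of_mem_support {b y a : V} (q : G.Walk b y) (hq : q.length = G.dist b y)
    (ha : a ∈ q.support) : a = q.getVert (G.dist b a) := by
  rw [← length_eq_dist_of_subwalk hq (q.isSubwalk_takeUntil ha), getVert_length_takeUntil]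

lemma dist_eq_dist_add_one_of_cons {u v w b : V} (h : G.Adj u v) (q : G.Walk v w)
    (hp : (cons h q).length = G.dist u w) (hb : b ∈ q.support) :
    G.dist u b = G.dist v b + 1 := by
  have hq : q.length = G.dist v w := length_eq_dist_of_subwalk hp (q.isSubwalk_cons h)
  have hub : u ≠ b := by
    rintro rfl
    exact ((cons_isPath_iff h q).1 ((cons h q).isPath_of_length_eq_dist hp)).2 hb
  have hlen := length_eq_dist_of_subwalk hp
    ((cons h q).isSubwalk_takeUntil (List.mem_of_mem_tail hb))
  rw [takeUntil_cons hb hub, length_cons,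
    length_eq_dist_of_subwalk hq (q.isSubwalk_takeUntil hb)] at hlen
  exact hlen.symm

lemma exists_pair_of_dist_eq {x y : V} (p : G.Walk x y) (hp : p.length = G.dist x y)
    (b : V) (k : ℕ) : ∃ a₁ a₂ : V, ∀ a : V, G.dist a b = k →
      (a = b ∨ a ∈ p.support ∧ b ∈ p.support) → a = a₁ ∨ a = a₂ := by
  by_cases hb : b ∈ p.support
  · refine ⟨(p.dropUntil b hb).getVert k, (p.takeUntil b hb).reverse.getVert k, ?_⟩
    rintro a rfl ha
    have ha : a ∈ p.support := by rcases ha with rfl | ⟨ha, -⟩ <;> assumption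
    rw [← p.take_spec hb, mem_support_append_iff] at ha
    rcases ha with ha | ha
    · right
      refine dist_comm (G := G) ▸ eq_getVert_dist_of_mem_support _ ?_ (by simpa using ha)
      rw [length_reverse, dist_comm]
      exact length_eq_dist_of_subwalk hp (p.isSubwalk_takeUntil hb)
    · left
      exact dist_comm (G := G) ▸ eq_getVert_dist_of_mem_support _
        (length_eq_dist_of_subwalk hp (p.isSubwalk_dropUntil hb)) ha
  · refine ⟨b, b, fun a _ ha => Or.inl ?_⟩
    exact ha.resolve_right fun h => hb h.2

end SimpleGraph.Walk

section WalkProd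

open SimpleGraph

variable {X : Type} {T : SimpleGraph X} {A : X → X → (ell2 X →L[ℂ] ell2 X)}

lemma walkProd_cons_apply {u v w : X} (h : T.Adj u v) (q : T.Walk v w) (f : ell2 X) :
    walkProd A (Walk.cons h q) f = A u v (walkProd A q f) := rfl

variable [DecidableEq X] {z : ℂ}

lemma walkProd_apply_delta_of_notMem_support (hA : ∀ u v, T.Adj u v → IsEdgeOp z u v (A u v))
    {u w b : X} (p : T.Walk u w) (hb : b ∉ p.support) : walkProd A p (delta b) = delta b := by
  induction p with
  | nil => rfl
  | @cons u v w h q ih =>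
    rw [Walk.support_cons, List.mem_cons, not_or] at hb
    rw [walkProd_cons_apply, ih hb.2]
    exact (hA u v h).2.2 b hb.1 fun hbv => hb.2 (hbv ▸ q.start_mem_support)

lemma walkProd_apply_delta_apply_eq_zero (hA : ∀ u v, T.Adj u v → IsEdgeOp z u v (A u v))
    {u w b a : X} (p : T.Walk u w) (hp : p.IsPath) (hb : b ∈ p.support)
    (ha : a ∉ p.support) : walkProd A p (delta b) a = 0 := by
  induction p with
  | nil =>
    rw [Walk.mem_support_nil_iff] at hb ha
    simp [walkProd, hb, delta_apply, ha]
  | @cons u v w h q ih =>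
    rw [Walk.cons_isPath_iff] at hp
    rw [Walk.support_cons, List.mem_cons, not_or] at ha
    have hav : a ≠ v := fun hav => ha.2 (hav ▸ q.start_mem_support)
    rw [walkProd_cons_apply, (hA u v h).apply_apply_of_ne h.ne _ ha.1 hav]
    rw [Walk.support_cons, List.mem_cons] at hb
    rcases hb with rfl | hb
    · rw [walkProd_apply_delta_of_notMem_support hA q hp.2, delta_apply, if_neg ha.1]
    · exact ih hp.1 hb ha.2

lemma eq_or_mem_support_of_walkProd_apply_delta_apply_ne_zero
    (hA : ∀ u v, T.Adj u v → IsEdgeOp z u v (A u v)) {u w b a : X} (p : T.Walk u w)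
    (hp : p.IsPath) (h : walkProd A p (delta b) a ≠ 0) :
    a = b ∨ a ∈ p.support ∧ b ∈ p.support := by
  by_cases hb : b ∈ p.support
  · exact Or.inr ⟨by_contra fun ha => h (walkProd_apply_delta_apply_eq_zero hA p hp hb ha), hb⟩
  · rw [walkProd_apply_delta_of_notMem_support hA p hb, delta_apply] at h
    exact Or.inl (by_contra fun hab => h (if_neg hab))

end WalkProd

lemma W_zero : W 0 = 1 := by simp [W]

lemma continuousAt_W_zero : ContinuousAt W 0 := by
  have h : ContinuousAt (fun w : ℂ => w ^ ((1 : ℂ) / 2)) (1 - 0 ^ 2) := by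
    simpa using continuousAt_cpow_const Complex.one_mem_slitPlane
  exact h.comp (f := fun z : ℂ => 1 - z ^ 2) (by fun_prop)

lemma W_ne_zero {z : ℂ} (hz : z ∈ Metric.ball (0 : ℂ) 1) : W z ≠ 0 := by
  rw [W, Ne, Complex.cpow_eq_zero_iff, not_and_or]
  left
  intro h
  have hz2 : ‖z‖ ^ 2 = 1 := by rw [← norm_pow, show z ^ 2 = 1 by linear_combination -h, norm_one]
  rw [mem_ball_zero_iff] at hz
  nlinarith [norm_nonneg z]

def IsSignedMonomial (k : ℕ) (f : ℂ → ℂ) : Prop :=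
  ∃ (ε : ℂ) (l : ℕ), (ε = 1 ∨ ε = -1) ∧ ∀ z ∈ Metric.ball (0 : ℂ) 1, f z = ε * z ^ k * W z ^ l

namespace IsSignedMonomial

variable {k k' : ℕ} {f g : ℂ → ℂ}

lemma exists_ne_zero (hf : IsSignedMonomial k f) : ∃ z ∈ Metric.ball (0 : ℂ) 1, f z ≠ 0 := by
  obtain ⟨ε, l, hε, hf⟩ := hf
  have hhalf : (1 / 2 : ℂ) ∈ Metric.ball (0 : ℂ) 1 := by norm_num
  refine ⟨1 / 2, hhalf, ?_⟩
  rw [hf _ hhalf]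
  have hε0 : ε ≠ 0 := by rcases hε with rfl | rfl <;> norm_num
  exact mul_ne_zero (mul_ne_zero hε0 (by norm_num)) (pow_ne_zero _ (W_ne_zero hhalf))

lemma degree_le (hf : IsSignedMonomial k f) (hf' : IsSignedMonomial k' f) : k ≤ k' := by
  by_contra! hlt
  obtain ⟨ε, l, -, hf⟩ := hf
  obtain ⟨ε', l', hε', hf'⟩ := hf'
  -- Dividing both expressions by `z ^ k'` and letting `z → 0` would give `ε' = 0`.
  set φ : ℂ → ℂ := fun z => ε' * W z ^ l' - ε * z ^ (k - k') * W z ^ l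
  have hφ : ∀ z ∈ Metric.ball (0 : ℂ) 1, z ≠ 0 → φ z = 0 := by
    intro z hz hz0
    have hfz := (hf z hz).symm.trans (hf' z hz)
    have hk := pow_mul_pow_sub z hlt.le
    refine (mul_right_injective₀ (pow_ne_zero k' hz0)) ?_
    linear_combination -hfz - ε * W z ^ l * hk
  have hφ0 : φ 0 ≠ 0 := by
    rcases hε' with rfl | rfl <;> simp [φ, W_zero, zero_pow (Nat.sub_ne_zero_of_lt hlt)]
  have hcont : ContinuousAt φ 0 := by
    have := continuousAt_W_zero
    fun_prop
  have hzero : ∀ᶠ z in 𝓝[≠] 0, φ z = 0 := by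
    filter_upwards [nhdsWithin_le_nhds (Metric.ball_mem_nhds (0 : ℂ) one_pos),
      self_mem_nhdsWithin] with z hz hz0 using hφ z hz hz0
  obtain ⟨z, hz, hz'⟩ := (hzero.and (nhdsWithin_le_nhds (hcont.eventually_ne hφ0))).exists
  exact hz' hz

lemma degree_eq (hf : IsSignedMonomial k f) (hf' : IsSignedMonomial k' f) : k = k' :=
  (hf.degree_le hf').antisymm (hf'.degree_le hf)

lemma of_eq (hf : IsSignedMonomial k f) (hg : ∀ z ∈ Metric.ball (0 : ℂ) 1, g z = f z) :
    IsSignedMonomial k g := by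
  obtain ⟨ε, l, hε, hf⟩ := hf
  exact ⟨ε, l, hε, fun z hz => (hg z hz).trans (hf z hz)⟩

lemma of_eq_W_mul (hf : IsSignedMonomial k f)
    (hg : ∀ z ∈ Metric.ball (0 : ℂ) 1, g z = W z * f z) : IsSignedMonomial k g := by
  obtain ⟨ε, l, hε, hf⟩ := hf
  exact ⟨ε, l + 1, hε, fun z hz => by rw [hg z hz, hf z hz]; ring⟩

lemma succ_of_eq_mul (hf : IsSignedMonomial k f)
    (hg : ∀ z ∈ Metric.ball (0 : ℂ) 1, g z = z * f z) : IsSignedMonomial (k + 1) g := by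
  obtain ⟨ε, l, hε, hf⟩ := hf
  exact ⟨ε, l, hε, fun z hz => by rw [hg z hz, hf z hz]; ring⟩

end IsSignedMonomial

section WalkProdCoefficients

open SimpleGraph

variable {X : Type} [DecidableEq X] {T : SimpleGraph X} {c : ℂ → X → X → (ell2 X →L[ℂ] ell2 X)}

lemma eq_zero_or_isSignedMonomial_of_eq_delta_apply {f : ℂ → ℂ} {a b : X}
    (hf : ∀ z ∈ Metric.ball (0 : ℂ) 1, f z = delta b a) :
    (∀ z ∈ Metric.ball (0 : ℂ) 1, f z = 0) ∨ IsSignedMonomial (T.dist a b) f := by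
  by_cases hab : a = b
  · subst hab
    exact Or.inr ⟨1, 0, Or.inl rfl, fun z hz => by simp [hf z hz, delta_apply]⟩
  · exact Or.inl fun z hz => by simp [hf z hz, delta_apply, hab]

lemma walkProd_apply_delta_start_apply_eq_zero_or_isSignedMonomial
    (hedge : ∀ z ∈ Metric.ball (0 : ℂ) 1, ∀ u v : X, T.Adj u v → IsEdgeOp z u v (c z u v))
    {u w : X} (p : T.Walk u w) (hp : p.IsPath) (a : X) :
    (∀ z ∈ Metric.ball (0 : ℂ) 1, walkProd (c z) p (delta u) a = 0) ∨
      IsSignedMonomial (T.dist a u) (fun z => walkProd (c z) p (delta u) a) := by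
  cases p with
  | nil => exact eq_zero_or_isSignedMonomial_of_eq_delta_apply fun _ _ => rfl
  | @cons _ v _ h q =>
    have hcoeff : ∀ z ∈ Metric.ball (0 : ℂ) 1,
        walkProd (c z) (Walk.cons h q) (delta u) a = W z * delta u a - z * delta v a := by
      intro z hz
      rw [walkProd_cons_apply, walkProd_apply_delta_of_notMem_support (hedge z hz) q
        ((Walk.cons_isPath_iff h q).1 hp).2, (hedge z hz u v h).1]
      rfl
    by_cases hau : a = u
    · subst hau
      exact Or.inr ⟨1, 1, Or.inl rfl, fun z hz => by simp [hcoeff z hz, delta_apply, h.ne]⟩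
    by_cases hav : a = v
    · subst hav
      refine Or.inr ⟨-1, 0, Or.inr rfl, fun z hz => ?_⟩
      simp [hcoeff z hz, delta_apply, hau, dist_eq_one_iff_adj.2 h.symm]
    · exact Or.inl fun z hz => by simp [hcoeff z hz, delta_apply, hau, hav]

lemma walkProd_apply_delta_apply_eq_zero_or_isSignedMonomial_of_mem_support
    (hedge : ∀ z ∈ Metric.ball (0 : ℂ) 1, ∀ u v : X, T.Adj u v → IsEdgeOp z u v (c z u v))
    {u w b : X} (p : T.Walk u w) (hp : p.length = T.dist u w) (hb : b ∈ p.support) (a : X) :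
    (∀ z ∈ Metric.ball (0 : ℂ) 1, walkProd (c z) p (delta b) a = 0) ∨
      IsSignedMonomial (T.dist a b) (fun z => walkProd (c z) p (delta b) a) := by
  have hpath := p.isPath_of_length_eq_dist hp
  induction p generalizing a with
  | nil =>
    rw [Walk.mem_support_nil_iff] at hb
    subst hb
    exact walkProd_apply_delta_start_apply_eq_zero_or_isSignedMonomial hedge _ hpath a
  | @cons u v w h q ih =>
    rw [Walk.support_cons, List.mem_cons] at hb
    rcases hb with rfl | hb
    · exact walkProd_apply_delta_start_apply_eq_zero_or_isSignedMonomial hedge _ hpath a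
    rw [Walk.cons_isPath_iff] at hpath
    have hq := length_eq_dist_of_subwalk hp (q.isSubwalk_cons h)
    simp only [walkProd_cons_apply]
    have hu : ∀ z ∈ Metric.ball (0 : ℂ) 1, walkProd (c z) q (delta b) u = 0 :=
      fun z hz => walkProd_apply_delta_apply_eq_zero (hedge z hz) q hpath.1 hb hpath.2
    by_cases hau : a = u
    · subst hau
      have hcoeff : ∀ z ∈ Metric.ball (0 : ℂ) 1,
          c z a v (walkProd (c z) q (delta b)) a = z * walkProd (c z) q (delta b) v := by
        intro z hz
        rw [(hedge z hz a v h).apply_apply_left h.ne, hu z hz, mul_zero, zero_add]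
      rw [Walk.dist_eq_dist_add_one_of_cons h q hp hb]
      exact (ih hq hb v hpath.1).imp (fun h0 z hz => by rw [hcoeff z hz, h0 z hz, mul_zero])
        (·.succ_of_eq_mul hcoeff)
    by_cases hav : a = v
    · subst hav
      have hcoeff : ∀ z ∈ Metric.ball (0 : ℂ) 1,
          c z u a (walkProd (c z) q (delta b)) a = W z * walkProd (c z) q (delta b) a := by
        intro z hz
        rw [(hedge z hz u a h).apply_apply_right h.ne, hu z hz, mul_zero, sub_zero]
      exact (ih hq hb a hpath.1).imp (fun h0 z hz => by rw [hcoeff z hz, h0 z hz, mul_zero])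
        (·.of_eq_W_mul hcoeff)
    · have hcoeff : ∀ z ∈ Metric.ball (0 : ℂ) 1,
          c z u v (walkProd (c z) q (delta b)) a = walkProd (c z) q (delta b) a :=
        fun z hz => (hedge z hz u v h).apply_apply_of_ne h.ne _ hau hav
      exact (ih hq hb a hpath.1).imp (fun h0 z hz => by rw [hcoeff z hz, h0 z hz])
        (·.of_eq hcoeff)

theorem walkProd_apply_delta_apply_eq_zero_or_isSignedMonomial
    (hedge : ∀ z ∈ Metric.ball (0 : ℂ) 1, ∀ u v : X, T.Adj u v → IsEdgeOp z u v (c z u v))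
    {u w : X} (p : T.Walk u w) (hp : p.length = T.dist u w) (b a : X) :
    (∀ z ∈ Metric.ball (0 : ℂ) 1, walkProd (c z) p (delta b) a = 0) ∨
      IsSignedMonomial (T.dist a b) (fun z => walkProd (c z) p (delta b) a) := by
  by_cases hb : b ∈ p.support
  · exact walkProd_apply_delta_apply_eq_zero_or_isSignedMonomial_of_mem_support hedge p hp hb a
  · exact eq_zero_or_isSignedMonomial_of_eq_delta_apply fun z hz => by
      rw [walkProd_apply_delta_of_notMem_support (hedge z hz) p hb]

end WalkProdCoefficients

theorem matrix_coefficient_count_general {X : Type} [DecidableEq X] (T : SimpleGraph X)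
    (hconn : T.Connected)
    (c : ℂ → X → X → (ell2 X →L[ℂ] ell2 X))
    (hedge : ∀ z ∈ Metric.ball (0 : ℂ) 1, ∀ u v : X, T.Adj u v →
      IsEdgeOp z u v (c z u v))
    (hgeo : ∀ z ∈ Metric.ball (0 : ℂ) 1, ∀ u v : X, ∀ p : T.Walk u v,
      p.length = T.dist u v → c z u v = walkProd (c z) p)
    (x y : X) :
    (∀ (b : X) (k : ℕ), ∃ a₁ a₂ : X, ∀ a : X,
      (∃ (ε : ℂ) (l : ℕ), (ε = 1 ∨ ε = -1) ∧ ∀ z ∈ Metric.ball (0 : ℂ) 1,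
        (inner ℂ (delta a) (c z x y (delta b)) : ℂ) = ε * z ^ k * W z ^ l) →
      a = a₁ ∨ a = a₂) ∧
    (∀ (a : X) (k : ℕ), ∃ b₁ b₂ : X, ∀ b : X,
      (∃ (ε : ℂ) (l : ℕ), (ε = 1 ∨ ε = -1) ∧ ∀ z ∈ Metric.ball (0 : ℂ) 1,
        (inner ℂ (delta a) (c z x y (delta b)) : ℂ) = ε * z ^ k * W z ^ l) →
      b = b₁ ∨ b = b₂) ∧
    (∀ (b : X) (k : ℕ), ∃ a₁ a₂ : X, ∀ a : X, T.dist a b = k →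
      (∃ z ∈ Metric.ball (0 : ℂ) 1, (inner ℂ (delta a) (c z x y (delta b)) : ℂ) ≠ 0) →
      a = a₁ ∨ a = a₂) ∧
    (∀ (a : X) (k : ℕ), ∃ b₁ b₂ : X, ∀ b : X, T.dist a b = k →
      (∃ z ∈ Metric.ball (0 : ℂ) 1, (inner ℂ (delta a) (c z x y (delta b)) : ℂ) ≠ 0) →
      b = b₁ ∨ b = b₂) := by
  obtain ⟨p, hpath, hpl⟩ := hconn.exists_path_of_dist x y
  have hcoeff : ∀ a b, ∀ z ∈ Metric.ball (0 : ℂ) 1,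
      inner ℂ (delta a) (c z x y (delta b)) = walkProd (c z) p (delta b) a :=
    fun a b z hz => by rw [hgeo z hz x y p hpl, inner_delta]
  have hsupp : ∀ a b, (∃ z ∈ Metric.ball (0 : ℂ) 1, inner ℂ (delta a) (c z x y (delta b)) ≠ 0) →
      a = b ∨ a ∈ p.support ∧ b ∈ p.support := by
    rintro a b ⟨z, hz, hne⟩
    rw [hcoeff a b z hz] at hne
    exact eq_or_mem_support_of_walkProd_apply_delta_apply_ne_zero (hedge z hz) p hpath hne
  have hdeg : ∀ a b k, IsSignedMonomial k (fun z => inner ℂ (delta a) (c z x y (delta b))) →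
      T.dist a b = k ∧ ∃ z ∈ Metric.ball (0 : ℂ) 1, inner ℂ (delta a) (c z x y (delta b)) ≠ 0 := by
    intro a b k hk
    obtain ⟨z, hz, hne⟩ := hk.exists_ne_zero
    refine ⟨?_, z, hz, hne⟩
    rcases walkProd_apply_delta_apply_eq_zero_or_isSignedMonomial hedge p hpl b a with h0 | hm
    · exact absurd ((hcoeff a b z hz).trans (h0 z hz)) hne
    · exact (hm.of_eq (hcoeff a b)).degree_eq hk
  have hsupp' : ∀ a b, (∃ z ∈ Metric.ball (0 : ℂ) 1, inner ℂ (delta a) (c z x y (delta b)) ≠ 0) →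
      b = a ∨ b ∈ p.support ∧ a ∈ p.support :=
    fun a b hne => (hsupp a b hne).imp Eq.symm And.symm
  refine ⟨fun b k => ?_, fun a k => ?_, fun b k => ?_, fun a k => ?_⟩
  · obtain ⟨a₁, a₂, h⟩ := p.exists_pair_of_dist_eq hpl b k
    exact ⟨a₁, a₂, fun a ha => h a (hdeg a b k ha).1 (hsupp a b (hdeg a b k ha).2)⟩
  · obtain ⟨b₁, b₂, h⟩ := p.exists_pair_of_dist_eq hpl a k
    exact ⟨b₁, b₂, fun b hb =>
      h b (SimpleGraph.dist_comm.trans (hdeg a b k hb).1) (hsupp' a b (hdeg a b k hb).2)⟩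
  · obtain ⟨a₁, a₂, h⟩ := p.exists_pair_of_dist_eq hpl b k
    exact ⟨a₁, a₂, fun a hd hne => h a hd (hsupp a b hne)⟩
  · obtain ⟨b₁, b₂, h⟩ := p.exists_pair_of_dist_eq hpl a k
    exact ⟨b₁, b₂, fun b hd hne => h b (SimpleGraph.dist_comm.trans hd) (hsupp' a b hne)⟩

/-- Let `x, y` be vertices of the tree `T` and write
`c_{ab}(z) = ⟨c_z(x,y)δ_b, δ_a⟩`.  For every `b ∈ X` and every `k ∈ ℕ`, the set of
vertices `a` with `c_{ab}(z) = ± z^k w^ℓ` for some `ℓ` and all `z ∈ 𝔻` has at most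
2 elements, and symmetrically in `a` and `b`.  Equivalently, for each `b` and `k`
there are at most 2 vertices `a` with `d(a,b) = k` and `c_{ab}` not identically zero
on `𝔻`, and symmetrically. -/
theorem matrix_coefficient_count {X : Type} [DecidableEq X] (T : SimpleGraph X)
    (hconn : T.Connected) (hacyc : T.IsAcyclic)
    (c : ℂ → X → X → (ell2 X →L[ℂ] ell2 X))
    (hedge : ∀ z ∈ Metric.ball (0 : ℂ) 1, ∀ u v : X, T.Adj u v →
      IsEdgeOp z u v (c z u v))
    (hgeo : ∀ z ∈ Metric.ball (0 : ℂ) 1, ∀ u v : X, ∀ p : T.Walk u v,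
      p.length = T.dist u v → c z u v = walkProd (c z) p)
    (x y : X) :
    (∀ (b : X) (k : ℕ), ∃ a₁ a₂ : X, ∀ a : X,
      (∃ (ε : ℂ) (l : ℕ), (ε = 1 ∨ ε = -1) ∧ ∀ z ∈ Metric.ball (0 : ℂ) 1,
        (inner ℂ (delta a) (c z x y (delta b)) : ℂ) = ε * z ^ k * W z ^ l) →
      a = a₁ ∨ a = a₂) ∧
    (∀ (a : X) (k : ℕ), ∃ b₁ b₂ : X, ∀ b : X,
      (∃ (ε : ℂ) (l : ℕ), (ε = 1 ∨ ε = -1) ∧ ∀ z ∈ Metric.ball (0 : ℂ) 1,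
        (inner ℂ (delta a) (c z x y (delta b)) : ℂ) = ε * z ^ k * W z ^ l) →
      b = b₁ ∨ b = b₂) ∧
    (∀ (b : X) (k : ℕ), ∃ a₁ a₂ : X, ∀ a : X, T.dist a b = k →
      (∃ z ∈ Metric.ball (0 : ℂ) 1, (inner ℂ (delta a) (c z x y (delta b)) : ℂ) ≠ 0) →
      a = a₁ ∨ a = a₂) ∧
    (∀ (a : X) (k : ℕ), ∃ b₁ b₂ : X, ∀ b : X, T.dist a b = k →
      (∃ z ∈ Metric.ball (0 : ℂ) 1, (inner ℂ (delta a) (c z x y (delta b)) : ℂ) ≠ 0) →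
      b = b₁ ∨ b = b₂) :=
  matrix_coefficient_count_general T hconn c hedge hgeo x y
end
end

section
/- For every z ∈ 𝔻, the map π_z from G to the invertible bounded operators on ℓ²(X) defined by π_z(g) = c_z(x, g·x)π(g) is a group homomorphism: π_z(e) = I and π_z(gh) = π_z(g)π_z(h) for all g, h ∈ G. -/
/-!
The operators `c_z(u, v)` form a multiplicative cocycle on the tree:
`c_z(u, v) c_z(v, w) = c_z(u, w)` for all vertices. Each edge operator is a rotation whose inverse
is the edge operator of the reversed edge (because `w² + z² = 1`), so the product along any walk
telescopes to the product along the geodesic, which is `c_z` by definition. The edge operators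
are also equivariant, `π(g) c_z(u, v) π(g)⁻¹ = c_z(g·u, g·v)`, since `g` permutes the Dirac
functions and maps edges to edges. A cocycle twisted by an equivariant representation is again
a representation:
`c(x, ghx) π(gh) = c(x, gx) c(gx, ghx) π(g) π(h) = c(x, gx) π(g) c(x, hx) π(h)`.
-/

noncomputable section

open scoped ComplexConjugate

namespace SimpleGraph

variable {X E : Type} [Monoid E] {T : SimpleGraph X}

theorem walkProd_append (f : X → X → E) {a b c : X} (p : T.Walk a b) (q : T.Walk b c) :
    walkProd f (p.append q) = walkProd f p * walkProd f q := by
  induction p with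
  | nil => simp [walkProd]
  | cons h p ih => simp [walkProd, ih, mul_assoc]

theorem mul_walkProd_eq_walkProd_map_mul {f : X → X → E} {P : E} (φ : T →g T)
    (hP : ∀ u v, T.Adj u v → P * f u v = f (φ u) (φ v) * P) {u v : X} (p : T.Walk u v) :
    P * walkProd f p = walkProd f (p.map φ) * P := by
  induction p with
  | nil => simp [walkProd]
  | cons h p ih =>
    rw [Walk.map_cons, walkProd, walkProd, ← mul_assoc, hP _ _ h, mul_assoc, ih, mul_assoc]

theorem IsAcyclic.length_eq_dist_of_isPath (hacyc : T.IsAcyclic) {u v : X} {p : T.Walk u v}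
    (hp : p.IsPath) : p.length = T.dist u v := by
  obtain ⟨q, hq⟩ := p.reachable.exists_walk_length_eq_dist
  have : p = q := congrArg Subtype.val <|
    (hacyc.subsingleton_path u v).elim ⟨p, hp⟩ ⟨q, q.isPath_of_length_eq_dist hq⟩
  rw [this, hq]

section Cocycle

variable {f : X → X → E}
  (hgeo : ∀ u v (p : T.Walk u v), p.length = T.dist u v → f u v = walkProd f p)

include hgeo

theorem apply_self_eq_one_of_geodesic (u : X) : f u u = 1 :=
  hgeo u u .nil (by simp)

variable (hacyc : T.IsAcyclic) (hinv : ∀ u v, T.Adj u v → f u v * f v u = 1)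

include hacyc

theorem eq_walkProd_of_isPath {u v : X} {p : T.Walk u v} (hp : p.IsPath) :
    f u v = walkProd f p :=
  hgeo u v p (hacyc.length_eq_dist_of_isPath hp)

include hinv

/-- A geodesic from `a` either passes through the neighbour `u` right away, so that `f u a`
cancels its first factor, or prolongs to a geodesic from `u`. -/
theorem mul_eq_of_adj {u a v : X} (hua : T.Adj u a) (hav : T.Reachable a v) :
    f u a * f a v = f u v := by
  classical
  obtain ⟨q, hq⟩ := hav.exists_path_of_dist
  by_cases hu : u ∈ q.support
  · have hfirst : q.takeUntil u hu = .cons hua.symm .nil := congrArg Subtype.val <|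
      (hacyc.subsingleton_path a u).elim ⟨_, hq.1.takeUntil hu⟩ (Path.singleton hua.symm)
    have hsplit : f a v = f a u * f u v := by
      rw [eq_walkProd_of_isPath hgeo hacyc hq.1, ← q.take_spec hu, walkProd_append, hfirst,
        ← eq_walkProd_of_isPath hgeo hacyc (hq.1.dropUntil hu)]
      simp [walkProd]
    rw [hsplit, ← mul_assoc, hinv u a hua, one_mul]
  · rw [eq_walkProd_of_isPath hgeo hacyc hq.1,
      eq_walkProd_of_isPath hgeo hacyc (p := .cons hua q) (hq.1.cons hu)]
    rfl

theorem walkProd_eq {u v : X} (p : T.Walk u v) : walkProd f p = f u v := by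
  induction p with
  | nil => exact (apply_self_eq_one_of_geodesic hgeo _).symm
  | cons h p ih => rw [walkProd, ih, mul_eq_of_adj hgeo hacyc hinv h p.reachable]

theorem mul_eq_of_reachable {u v w : X} (huv : T.Reachable u v) (hvw : T.Reachable v w) :
    f u v * f v w = f u w := by
  obtain ⟨p⟩ := huv
  obtain ⟨q⟩ := hvw
  rw [← walkProd_eq hgeo hacyc hinv p, ← walkProd_eq hgeo hacyc hinv q, ← walkProd_append,
    walkProd_eq hgeo hacyc hinv]

theorem mul_eq_mul_of_reachable {P : E} (φ : T →g T)
    (hP : ∀ u v, T.Adj u v → P * f u v = f (φ u) (φ v) * P) {u v : X} (huv : T.Reachable u v) :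
    P * f u v = f (φ u) (φ v) * P := by
  obtain ⟨p⟩ := huv
  rw [← walkProd_eq hgeo hacyc hinv p, ← walkProd_eq hgeo hacyc hinv (p.map φ)]
  exact mul_walkProd_eq_walkProd_map_mul φ hP p

end Cocycle

end SimpleGraph

theorem cocycle_mul_map_mul {G X E : Type} [Monoid G] [MulAction G X] [Monoid E]
    {f : X → X → E} {U : G → E} (hf : ∀ u v w, f u v * f v w = f u w)
    (hU : ∀ g h, U (g * h) = U g * U h) (hequiv : ∀ g u v, U g * f u v = f (g • u) (g • v) * U g)
    (x : X) (g h : G) :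
    f x ((g * h) • x) * U (g * h) = (f x (g • x) * U g) * (f x (h • x) * U h) := by
  calc f x ((g * h) • x) * U (g * h)
      = f x (g • x) * (f (g • x) (g • h • x) * U g) * U h := by
        rw [← hf x (g • x), mul_smul, hU]; simp only [mul_assoc]
    _ = (f x (g • x) * U g) * (f x (h • x) * U h) := by
        rw [← hequiv]; simp only [mul_assoc]

section EdgeOperators

variable {X : Type} [DecidableEq X]

theorem ell2.ext_delta {A B : ell2 X →L[ℂ] ell2 X} (h : ∀ v, A (delta v) = B (delta v)) :
    A = B := by
  refine lp.ext_continuousLinearMap (by norm_num) fun v => ?_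
  refine ContinuousLinearMap.ext_ring ?_
  simpa [delta] using h v

theorem W_mul_self (z : ℂ) : W z * W z = 1 - z ^ 2 := by
  rw [← sq, W, one_div, Complex.cpow_ofNat_inv_pow]

theorem IsEdgeOp.mul_eq_one {z : ℂ} {u v : X} {A B : ell2 X →L[ℂ] ell2 X}
    (hA : IsEdgeOp z u v A) (hB : IsEdgeOp z v u B) : A * B = 1 := by
  obtain ⟨hAu, hAv, hA⟩ := hA
  obtain ⟨hBv, hBu, hB⟩ := hB
  have hW := W_mul_self z
  refine ell2.ext_delta fun w => ?_
  by_cases hwu : w = u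
  · subst hwu
    simp only [mul_apply_eq_comp, one_apply_eq_self, hBu, map_add,
      map_smul, hAu, hAv]
    match_scalars <;> first | ring1 | linear_combination hW
  by_cases hwv : w = v
  · subst hwv
    simp only [mul_apply_eq_comp, one_apply_eq_self, hBv, map_sub,
      map_smul, hAu, hAv]
    match_scalars <;> first | ring1 | linear_combination hW
  simp [hB w hwv hwu, hA w hwu hwv]

theorem IsEdgeOp.mul_eq_mul_of_apply_delta {z : ℂ} {u v : X} {σ : X → X}
    (hσ : Function.Injective σ) {P A B : ell2 X →L[ℂ] ell2 X}
    (hP : ∀ w, P (delta w) = delta (σ w)) (hA : IsEdgeOp z u v A)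
    (hB : IsEdgeOp z (σ u) (σ v) B) : P * A = B * P := by
  obtain ⟨hAu, hAv, hA⟩ := hA
  obtain ⟨hBu, hBv, hB⟩ := hB
  refine ell2.ext_delta fun w => ?_
  by_cases hwu : w = u
  · subst hwu
    simp [hP, hAu, hBu]
  by_cases hwv : w = v
  · subst hwv
    simp [hP, hAv, hBv]
  simp [hP, hA w hwu hwv, hB _ (hσ.ne hwu) (hσ.ne hwv)]

end EdgeOperators

/-- For every `z ∈ 𝔻`, the map `π_z : g ↦ c_z(x, g·x)π(g)` from `G` to
the invertible bounded operators on `ℓ²(X)` is a group homomorphism: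
`π_z(e) = I` and `π_z(gh) = π_z(g)π_z(h)`. -/
theorem pi_z_is_homomorphism {X : Type} [DecidableEq X] (T : SimpleGraph X)
    (hconn : T.Connected) (hacyc : T.IsAcyclic)
    (c : ℂ → X → X → (ell2 X →L[ℂ] ell2 X))
    (hedge : ∀ z ∈ Metric.ball (0 : ℂ) 1, ∀ u v : X, T.Adj u v →
      IsEdgeOp z u v (c z u v))
    (hgeo : ∀ z ∈ Metric.ball (0 : ℂ) 1, ∀ u v : X, ∀ p : T.Walk u v,
      p.length = T.dist u v → c z u v = walkProd (c z) p)
    {G : Type} [Group G] [MulAction G X]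
    (hact : ∀ (g : G) (u v : X), T.Adj u v ↔ T.Adj (g • u) (g • v))
    (U : G → (ell2 X →L[ℂ] ell2 X))
    (hU : ∀ (g : G) (v : X), U g (delta v) = delta (g • v))
    (x₀ : X) :
    ∀ z ∈ Metric.ball (0 : ℂ) 1,
      c z x₀ ((1 : G) • x₀) * U 1 = 1 ∧
      ∀ g h : G,
        c z x₀ ((g * h) • x₀) * U (g * h) =
          (c z x₀ (g • x₀) * U g) * (c z x₀ (h • x₀) * U h) := by
  intro z hz
  have hinv : ∀ u v, T.Adj u v → c z u v * c z v u = 1 := fun u v huv =>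
    (hedge z hz u v huv).mul_eq_one (hedge z hz v u huv.symm)
  have hcocycle : ∀ u v w, c z u v * c z v w = c z u w := fun u v w =>
    SimpleGraph.mul_eq_of_reachable (hgeo z hz) hacyc hinv (hconn u v) (hconn v w)
  have hequiv : ∀ g u v, U g * c z u v = c z (g • u) (g • v) * U g := fun g u v =>
    SimpleGraph.mul_eq_mul_of_reachable (hgeo z hz) hacyc hinv ⟨(g • ·), (hact g _ _).mp⟩
      (fun a b hab => (hedge z hz a b hab).mul_eq_mul_of_apply_delta (MulAction.injective g)
        (hU g) (hedge z hz _ _ ((hact g a b).mp hab))) (hconn u v)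
  have hU_one : U 1 = 1 := ell2.ext_delta fun v => by simp [hU]
  have hU_mul : ∀ g h, U (g * h) = U g * U h := fun g h =>
    ell2.ext_delta fun v => by simp [hU, mul_smul]
  refine ⟨?_, cocycle_mul_map_mul hcocycle hU_mul hequiv x₀⟩
  rw [one_smul, SimpleGraph.apply_self_eq_one_of_geodesic (hgeo z hz), hU_one, one_mul]
end
end
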